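/- Fix n, p ≥ 1, ν > 0, γ₂ ≥ 0, nonnegative weights u₁, …, u_p, data vectors x₁, …, x_p ∈ ℝⁿ, and for each pair l = (i₁, i₂) with 1 ≤ i₁ < i₂ ≤ n a vector ṽ_l ∈ ℝᵖ with entries ṽ_{jl}. Let ℰ be the set of all such pairs. For A ∈ ℝ^{n×p} with columns a₁, …, a_p and rows A_{1·}, …, A_{n·}, define f(A) = (1/2) Σ_{j=1}^p ‖x_j − a_j‖₂² + (ν/2) Σ_{l∈ℰ} ‖ṽ_l − A_{i₁·} + A_{i₂·}‖₂² + γ₂ Σ_{j=1}^p u_j ‖a_j‖₂. Let N = √(1+nν) I_n − ((√(1+nν) − 1)/n) 1_n 1_nᵀ, whose inverse is N⁻¹ = (1+nν)^{−1/2} [I_n + n^{−1}(√(1+nν) − 1) 1_n 1_nᵀ], and set y_j = N⁻¹ [x_j + ν Σ_{l∈ℰ} ṽ_{jl} (e_{i₁} − e_{i₂})] for each j = 1, …, p. Then A minimizes f over ℝ^{n×p} if and only if, for each j = 1, …, p, the column a_j minimizes the map a ↦ (1/2) ‖y_j − N a‖₂² + γ₂ u_j ‖a‖₂ over ℝⁿ;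 equivalently, f(A) equals Σ_{j=1}^p [(1/2) ‖y_j − N a_j‖₂² + γ₂ u_j ‖a_j‖₂] plus a constant not depending on A. -/

import Mathlib

/-!
Matrices `α I + β 1 1ᵀ` multiply like `(α, β) (γ, δ) = (αγ, αδ + βγ + nβδ)`, so `N * N⁻¹ = I`
and `N * N = (1 + nν) I - ν 1 1ᵀ`; moreover `N` is symmetric. Expanding the squares column by
column, the part of `2 f` quadratic in `a_j` is
`‖a_j‖² + ν ∑_{i<k} (a_{ij} - a_{kj})² = ‖a_j‖² + ν (n ‖a_j‖² - (∑_i a_{ij})²) = ‖N a_j‖²`,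
and the linear part is `-2 ⟨x_j + ν ∑_l ṽ_{jl} (e_{i₁} - e_{i₂}), a_j⟩ = -2 ⟨N y_j, a_j⟩`
`= -2 ⟨y_j, N a_j⟩`. Hence `f(A) - ∑_j g_j(a_j)` does not depend on `A`, and a sum of functions
of separate columns is minimal exactly when every summand is.
-/

open Finset Matrix

noncomputable section

/-- The edge set `ℰ = {(i₁,i₂) : 1 ≤ i₁ < i₂ ≤ n}`. -/
def edges (n : ℕ) : Finset (Fin n × Fin n) :=
  Finset.univ.filter fun l => l.1 < l.2

/-- The objective `f(A) = (1/2)∑_j ‖x_j − a_j‖₂² + (ν/2)∑_{l∈ℰ} ‖ṽ_l − A_{i₁·} + A_{i₂·}‖₂²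
 + γ₂ ∑_j u_j ‖a_j‖₂` of the A-update of S-ADMM. -/
def fObj (n p : ℕ) (ν γ₂ : ℝ) (u : Fin p → ℝ) (x : Fin p → Fin n → ℝ)
    (vt : Fin n × Fin n → Fin p → ℝ) (A : Matrix (Fin n) (Fin p) ℝ) : ℝ :=
  (1 / 2) * ∑ j, (∑ i, (x j i - A i j) ^ 2)
    + (ν / 2) * ∑ l ∈ edges n, (∑ j, (vt l j - A l.1 j + A l.2 j) ^ 2)
    + γ₂ * ∑ j, u j * Real.sqrt (∑ i, (A i j) ^ 2)

/-- The matrix `N = √(1+nν) I_n − ((√(1+nν) − 1)/n) 1_n 1_nᵀ`. -/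
def Nmat (n : ℕ) (ν : ℝ) : Matrix (Fin n) (Fin n) ℝ :=
  Real.sqrt (1 + (n : ℝ) * ν) • (1 : Matrix (Fin n) (Fin n) ℝ)
    - ((Real.sqrt (1 + (n : ℝ) * ν) - 1) / (n : ℝ)) •
        Matrix.vecMulVec (fun _ : Fin n => (1 : ℝ)) (fun _ : Fin n => (1 : ℝ))

/-- The inverse `N⁻¹ = (1+nν)^{−1/2} [I_n + n^{−1}(√(1+nν) − 1) 1_n 1_nᵀ]`. -/
def NmatInv (n : ℕ) (ν : ℝ) : Matrix (Fin n) (Fin n) ℝ :=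
  ((1 + (n : ℝ) * ν) ^ (-(1 / 2 : ℝ))) •
    ((1 : Matrix (Fin n) (Fin n) ℝ)
      + ((n : ℝ)⁻¹ * (Real.sqrt (1 + (n : ℝ) * ν) - 1)) •
          Matrix.vecMulVec (fun _ : Fin n => (1 : ℝ)) (fun _ : Fin n => (1 : ℝ)))

/-- The pseudo-responses `y_j = N⁻¹ [x_j + ν ∑_{l∈ℰ} ṽ_{jl}(e_{i₁} − e_{i₂})]`. -/
def yvec (n p : ℕ) (ν : ℝ) (x : Fin p → Fin n → ℝ)
    (vt : Fin n × Fin n → Fin p → ℝ) (j : Fin p) : Fin n → ℝ :=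
  (NmatInv n ν).mulVec (fun i => x j i
    + ν * ∑ l ∈ edges n, vt l j * ((if i = l.1 then (1 : ℝ) else 0) - (if i = l.2 then 1 else 0)))

/-- The `j`-th group-lasso pseudo-regression objective
`g_j(a) = (1/2)‖y_j − N a‖₂² + γ₂ u_j ‖a‖₂`. -/
def gObj (n p : ℕ) (ν γ₂ : ℝ) (u : Fin p → ℝ) (x : Fin p → Fin n → ℝ)
    (vt : Fin n × Fin n → Fin p → ℝ) (j : Fin p) (a : Fin n → ℝ) : ℝ :=
  (1 / 2) * ∑ i, (yvec n p ν x vt j i - (Nmat n ν).mulVec a i) ^ 2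
    + γ₂ * u j * Real.sqrt (∑ i, (a i) ^ 2)

namespace Matrix

variable {ι R : Type*} [Fintype ι] [DecidableEq ι] [CommRing R]

theorem smul_one_add_smul_vecMulVec_one_mul (a b c d : R) :
    (a • (1 : Matrix ι ι R) + b • vecMulVec (fun _ => (1 : R)) (fun _ => 1)) *
        (c • 1 + d • vecMulVec (fun _ => (1 : R)) (fun _ => 1)) =
      (a * c) • 1 + (a * d + b * c + Fintype.card ι * b * d) •
        vecMulVec (fun _ : ι => (1 : R)) (fun _ => 1) := by
  have hJ : vecMulVec (fun _ : ι => (1 : R)) (fun _ => 1) *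
      vecMulVec (fun _ => 1) (fun _ : ι => 1) =
        (Fintype.card ι : R) • vecMulVec (fun _ : ι => (1 : R)) (fun _ => 1) := by
    rw [vecMulVec_mul_vecMulVec]
    ext i k
    simp [vecMulVec_apply, dotProduct]
  simp only [add_mul, mul_add, smul_mul_smul_comm, mul_one, one_mul, hJ, smul_smul]
  module

theorem dotProduct_smul_one_add_smul_vecMulVec_one_mulVec (a b : R) (v : ι → R) :
    v ⬝ᵥ ((a • (1 : Matrix ι ι R) + b • vecMulVec (fun _ => 1) (fun _ => 1)) *ᵥ v) =
      a * (v ⬝ᵥ v) + b * (∑ i, v i) ^ 2 := by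
  simp only [add_mulVec, smul_mulVec, one_mulVec, vecMulVec_mulVec, dotProduct_add,
    dotProduct_smul]
  simp [dotProduct, sq, Finset.mul_sum, Finset.sum_mul]

end Matrix

theorem Finset.sum_sum_eq_two_nsmul_sum_filter_lt {ι M : Type*} [Fintype ι] [LinearOrder ι]
    [AddCommMonoid M] (F : ι → ι → M) (hsymm : ∀ i k, F i k = F k i) (hdiag : ∀ i, F i i = 0) :
    ∑ i, ∑ k, F i k = 2 • ∑ l ∈ (univ : Finset (ι × ι)) with l.1 < l.2, F l.1 l.2 := by
  have hsplit : ∀ i k, F i k = (if i < k then F i k else 0) + (if k < i then F k i else 0) := by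
    intro i k
    rcases lt_trichotomy i k with h | rfl | h
    · simp [h, h.not_gt]
    · simp [hdiag]
    · simp [h, h.not_gt, hsymm i k]
  have hlt : ∑ i, ∑ k, (if i < k then F i k else 0) =
      ∑ l ∈ (univ : Finset (ι × ι)) with l.1 < l.2, F l.1 l.2 := by
    rw [sum_filter, ← univ_product_univ, sum_product]
  calc ∑ i, ∑ k, F i k
      = ∑ i, ∑ k, (if i < k then F i k else 0) + ∑ i, ∑ k, (if k < i then F k i else 0) := by
        rw [← sum_add_distrib]
        refine sum_congr rfl fun i _ => ?_
        rw [← sum_add_distrib]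
        exact sum_congr rfl fun k _ => hsplit i k
    _ = 2 • ∑ l ∈ (univ : Finset (ι × ι)) with l.1 < l.2, F l.1 l.2 := by
        rw [sum_comm (f := fun i k => if k < i then F k i else 0), hlt, two_nsmul]

theorem Finset.sum_filter_lt_sub_sq {ι R : Type*} [Fintype ι] [LinearOrder ι] [Field R]
    [CharZero R] (a : ι → R) :
    ∑ l ∈ (univ : Finset (ι × ι)) with l.1 < l.2, (a l.1 - a l.2) ^ 2 =
      Fintype.card ι * ∑ i, a i ^ 2 - (∑ i, a i) ^ 2 := by
  have h := sum_sum_eq_two_nsmul_sum_filter_lt (fun i k => (a i - a k) ^ 2)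
    (fun i k => by ring) (fun i => by ring)
  have hexp : ∑ i, ∑ k, (a i - a k) ^ 2 =
      2 * (Fintype.card ι * ∑ i, a i ^ 2 - (∑ i, a i) ^ 2) := by
    simp only [sub_sq, sum_add_distrib, sum_sub_distrib, sum_const, card_univ, nsmul_eq_mul,
      ← mul_sum, ← sum_mul, mul_assoc]
    ring
  rw [hexp, nsmul_eq_mul, Nat.cast_ofNat] at h
  exact (mul_left_cancel₀ two_ne_zero h).symm

theorem Finset.forall_sum_le_sum_iff {ι β M : Type*} [Fintype ι] [DecidableEq ι]
    [AddCommMonoid M] [PartialOrder M] [IsOrderedCancelAddMonoid M] (G : ι → β → M) (a : ι → β) :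
    (∀ b : ι → β, ∑ j, G j (a j) ≤ ∑ j, G j (b j)) ↔ ∀ j c, G j (a j) ≤ G j c := by
  refine ⟨fun h j c => ?_, fun h b => sum_le_sum fun j _ => h j (b j)⟩
  have hb := h (Function.update a j c)
  simp only [Function.apply_update (fun j => G j), sum_update_of_mem (mem_univ j)] at hb
  rwa [← add_sum_erase _ _ (mem_univ j), ← sdiff_singleton_eq_erase, add_le_add_iff_right] at hb

theorem Finset.sum_sub_sq_eq {α R : Type*} [CommRing R] (s : Finset α) (f g : α → R) :
    ∑ l ∈ s, (f l - g l) ^ 2 =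
      ∑ l ∈ s, f l ^ 2 - 2 * ∑ l ∈ s, f l * g l + ∑ l ∈ s, g l ^ 2 := by
  simp only [sub_sq, sum_add_distrib, sum_sub_distrib, mul_sum, mul_assoc]

theorem Finset.sum_incidence_mul {ι R : Type*} [DecidableEq ι] [Fintype ι] [CommRing R]
    (s : Finset (ι × ι)) (w : ι × ι → R) (a : ι → R) :
    ∑ i, (∑ l ∈ s, w l * ((if i = l.1 then 1 else 0) - (if i = l.2 then 1 else 0))) * a i =
      ∑ l ∈ s, w l * (a l.1 - a l.2) := by
  simp only [sum_mul, mul_assoc, sub_mul, ite_mul, one_mul, zero_mul]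
  rw [sum_comm]
  simp [← mul_sum, sum_sub_distrib]

section Nmat

variable {n : ℕ} {ν : ℝ}

theorem Nmat_eq : Nmat n ν = √(1 + n * ν) • 1 +
    (-((√(1 + n * ν) - 1) / n)) • vecMulVec (fun _ : Fin n => (1 : ℝ)) (fun _ => 1) := by
  rw [Nmat, neg_smul, ← sub_eq_add_neg]

theorem NmatInv_eq (hν : 0 ≤ ν) : NmatInv n ν = (√(1 + n * ν))⁻¹ • 1 +
    ((√(1 + n * ν))⁻¹ * ((√(1 + n * ν) - 1) / n)) •
      vecMulVec (fun _ : Fin n => (1 : ℝ)) (fun _ => 1) := by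
  rw [NmatInv, Real.rpow_neg (by positivity), ← Real.sqrt_eq_rpow, smul_add, smul_smul]
  congr 2
  ring

theorem Nmat_mul_NmatInv (hn : n ≠ 0) (hν : 0 ≤ ν) : Nmat n ν * NmatInv n ν = 1 := by
  have hs : √(1 + n * ν) ≠ 0 := (Real.sqrt_pos.mpr (by positivity)).ne'
  rw [Nmat_eq, NmatInv_eq hν, smul_one_add_smul_vecMulVec_one_mul, Fintype.card_fin]
  have hn' : (n : ℝ) ≠ 0 := by exact_mod_cast hn
  rw [mul_inv_cancel₀ hs, one_smul, add_eq_left]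
  convert zero_smul ℝ _
  field_simp
  ring

theorem Nmat_mul_self (hn : n ≠ 0) (hν : 0 ≤ ν) :
    Nmat n ν * Nmat n ν =
      (1 + n * ν) • 1 + (-ν) • vecMulVec (fun _ : Fin n => (1 : ℝ)) (fun _ => 1) := by
  have hs : √(1 + n * ν) ^ 2 = 1 + n * ν := Real.sq_sqrt (by positivity)
  have hn' : (n : ℝ) ≠ 0 := by exact_mod_cast hn
  rw [Nmat_eq, smul_one_add_smul_vecMulVec_one_mul, Fintype.card_fin]
  congr 2
  · rw [← sq, hs]
  · field_simp
    linear_combination -hs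

theorem Nmat_transpose : (Nmat n ν)ᵀ = Nmat n ν := by
  rw [Nmat, transpose_sub, transpose_smul, transpose_smul, transpose_one, transpose_vecMulVec]

theorem dotProduct_Nmat_mulVec (b c : Fin n → ℝ) :
    b ⬝ᵥ (Nmat n ν *ᵥ c) = (Nmat n ν *ᵥ b) ⬝ᵥ c := by
  rw [dotProduct_mulVec, ← mulVec_transpose, Nmat_transpose]

theorem sum_Nmat_mulVec_sq (hn : n ≠ 0) (hν : 0 ≤ ν) (a : Fin n → ℝ) :
    ∑ i, (Nmat n ν *ᵥ a) i ^ 2 = (1 + n * ν) * ∑ i, a i ^ 2 - ν * (∑ i, a i) ^ 2 := by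
  have h := dotProduct_Nmat_mulVec (ν := ν) (Nmat n ν *ᵥ a) a
  rw [mulVec_mulVec, Nmat_mul_self hn hν, dotProduct_comm (_ *ᵥ a) a,
    dotProduct_smul_one_add_smul_vecMulVec_one_mulVec] at h
  simpa [dotProduct, sq, sub_eq_add_neg] using h

end Nmat

theorem half_sum_sq_add_edges_eq_half_sum_sq_sub_Nmat_mulVec {n p : ℕ} (hn : n ≠ 0) {ν : ℝ}
    (hν : 0 ≤ ν) (x : Fin p → Fin n → ℝ) (vt : Fin n × Fin n → Fin p → ℝ) (j : Fin p)
    (a : Fin n → ℝ) :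
    (1 / 2) * ∑ i, (x j i - a i) ^ 2 + (ν / 2) * ∑ l ∈ edges n, (vt l j - a l.1 + a l.2) ^ 2 =
      (1 / 2) * ∑ i, (yvec n p ν x vt j i - (Nmat n ν *ᵥ a) i) ^ 2 +
        ((1 / 2) * ∑ i, x j i ^ 2 + (ν / 2) * ∑ l ∈ edges n, vt l j ^ 2 -
          (1 / 2) * ∑ i, yvec n p ν x vt j i ^ 2) := by
  have hNy : Nmat n ν *ᵥ yvec n p ν x vt j = fun i => x j i + ν * ∑ l ∈ edges n, vt l j *
      ((if i = l.1 then (1 : ℝ) else 0) - (if i = l.2 then 1 else 0)) := by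
    rw [yvec, mulVec_mulVec, Nmat_mul_NmatInv hn hν, one_mulVec]
  set y := yvec n p ν x vt j
  have hcross : ∑ i, y i * (Nmat n ν *ᵥ a) i =
      ∑ i, x j i * a i + ν * ∑ l ∈ edges n, vt l j * (a l.1 - a l.2) := by
    rw [← sum_incidence_mul, mul_sum, ← sum_add_distrib]
    refine (dotProduct_Nmat_mulVec y a).trans ?_
    simp only [dotProduct, hNy, add_mul, mul_assoc]
  have hquad := sum_Nmat_mulVec_sq hn hν a
  have hedges : ∑ l ∈ edges n, (a l.1 - a l.2) ^ 2 = n * ∑ i, a i ^ 2 - (∑ i, a i) ^ 2 := by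
    have h := sum_filter_lt_sub_sq a
    rwa [Fintype.card_fin] at h
  simp only [sub_add]
  rw [sum_sub_sq_eq univ (x j) a, sum_sub_sq_eq (edges n) (vt · j) (fun l => a l.1 - a l.2),
    sum_sub_sq_eq univ y (Nmat n ν *ᵥ a), hcross, hquad, hedges]
  ring

theorem stmt1_general (n p : ℕ) (hn : 1 ≤ n) (ν : ℝ) (hν : 0 < ν)
    (γ₂ : ℝ) (u : Fin p → ℝ)
    (x : Fin p → Fin n → ℝ) (vt : Fin n × Fin n → Fin p → ℝ) :
    (∀ A : Matrix (Fin n) (Fin p) ℝ,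
        (∀ B, fObj n p ν γ₂ u x vt A ≤ fObj n p ν γ₂ u x vt B)
          ↔ (∀ j : Fin p, ∀ a : Fin n → ℝ,
              gObj n p ν γ₂ u x vt j (fun i => A i j) ≤ gObj n p ν γ₂ u x vt j a))
    ∧ ∃ c : ℝ, ∀ A : Matrix (Fin n) (Fin p) ℝ,
        fObj n p ν γ₂ u x vt A = (∑ j, gObj n p ν γ₂ u x vt j (fun i => A i j)) + c := by
  obtain ⟨c, hc⟩ : ∃ c : ℝ, ∀ A : Matrix (Fin n) (Fin p) ℝ,
      fObj n p ν γ₂ u x vt A = (∑ j, gObj n p ν γ₂ u x vt j (fun i => A i j)) + c := by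
    refine ⟨∑ j, ((1 / 2) * ∑ i, x j i ^ 2 + (ν / 2) * ∑ l ∈ edges n, vt l j ^ 2 -
      (1 / 2) * ∑ i, yvec n p ν x vt j i ^ 2), fun A => ?_⟩
    rw [fObj, sum_comm (s := edges n), mul_sum, mul_sum, mul_sum, ← sum_add_distrib,
      ← sum_add_distrib, ← sum_add_distrib]
    refine sum_congr rfl fun j _ => ?_
    rw [half_sum_sq_add_edges_eq_half_sum_sq_sub_Nmat_mulVec (by omega) hν.le x vt j, gObj]
    ring
  refine ⟨fun A => ?_, c, hc⟩
  simp only [hc, add_le_add_iff_right]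
  have hsep := forall_sum_le_sum_iff (gObj n p ν γ₂ u x vt) Aᵀ
  exact ⟨fun h => hsep.1 fun b => h (of b)ᵀ, fun h B => hsep.2 h Bᵀ⟩

/-- `A` minimizes `f` over `ℝ^{n×p}` if and only if each column `a_j`
minimizes the group-lasso pseudo-regression objective `g_j`; equivalently, `f(A)` equals
`∑_j g_j(a_j)` plus a constant not depending on `A`. -/
theorem stmt1 (n p : ℕ) (hn : 1 ≤ n) (hp : 1 ≤ p) (ν : ℝ) (hν : 0 < ν)
    (γ₂ : ℝ) (hγ₂ : 0 ≤ γ₂) (u : Fin p → ℝ) (hu : ∀ j, 0 ≤ u j)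
    (x : Fin p → Fin n → ℝ) (vt : Fin n × Fin n → Fin p → ℝ) :
    (∀ A : Matrix (Fin n) (Fin p) ℝ,
        (∀ B, fObj n p ν γ₂ u x vt A ≤ fObj n p ν γ₂ u x vt B)
          ↔ (∀ j : Fin p, ∀ a : Fin n → ℝ,
              gObj n p ν γ₂ u x vt j (fun i => A i j) ≤ gObj n p ν γ₂ u x vt j a))
    ∧ ∃ c : ℝ, ∀ A : Matrix (Fin n) (Fin p) ℝ,
        fObj n p ν γ₂ u x vt A = (∑ j, gObj n p ν γ₂ u x vt j (fun i => A i j)) + c :=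
  stmt1_general n p hn ν hν γ₂ u x vt
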